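/- In the same (P₆, HHD)-free C_k setup: if d_i is not adjacent to x_i, then d_{i+2} is adjacent to x_{i+1} and d_{i+2} is not adjacent to x_{i+2} (indices mod k). -/

import Mathlib

open SimpleGraph Finset

variable {V : Type*}

/-- The square of a graph `G`: two distinct vertices are adjacent iff
their distance in `G` is 1 or 2. -/
def square (G : SimpleGraph V) : SimpleGraph V where
  Adj u v := u ≠ v ∧ (G.Adj u v ∨ ∃ w, G.Adj u w ∧ G.Adj w v)
  symm := ⟨by
    rintro u v ⟨h, h2 | ⟨w, hw1, hw2⟩⟩
    · exact ⟨h.symm, Or.inl h2.symm⟩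
    · exact ⟨h.symm, Or.inr ⟨w, hw2.symm, hw1.symm⟩⟩⟩
  loopless := ⟨by rintro u ⟨h, _⟩; exact h rfl⟩

/-- `D` is an efficient dominating set of `G`: every vertex is dominated
(by closed neighborhoods) by exactly one vertex of `D`. -/
def IsEDS (G : SimpleGraph V) (D : Set V) : Prop :=
  ∀ v : V, ∃! d : V, d ∈ D ∧ (d = v ∨ G.Adj d v)

/-- `G` has no induced subgraph isomorphic to `H`. -/
def Free {W : Type*} (G : SimpleGraph V) (H : SimpleGraph W) : Prop :=
  IsEmpty (H ↪g G)

/-- The house: the complement of the path on five vertices. -/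
def house : SimpleGraph (Fin 5) := (pathGraph 5)ᶜ

/-- The domino: a `P₅` `x₁ … x₅` together with a vertex adjacent to `x₁, x₃, x₅`. -/
def domino : SimpleGraph (Fin 6) :=
  SimpleGraph.fromRel (fun i j =>
    (i, j) ∈ [((0 : Fin 6), (1 : Fin 6)), (1, 2), (2, 3), (3, 4), (5, 0), (5, 2), (5, 4)])

/-- A graph is hole-free if it contains no induced cycle `C_k`, `k ≥ 5`. -/
def HoleFree (G : SimpleGraph V) : Prop := ∀ k, 5 ≤ k → _root_.Free G (cycleGraph k)

/-- A graph is chordal if it contains no induced cycle `C_k`, `k ≥ 4`. -/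
def Chordal (G : SimpleGraph V) : Prop := ∀ k, 4 ≤ k → _root_.Free G (cycleGraph k)

/-!
If `d i` saw `x (i + 1)`, then `v i, x i, x (i + 1), d i` would be a 4-cycle with roof `v (i + 1)`,
a house. If moreover `d (i + 2)` missed `x (i + 1)`, the same argument would show that it misses
`x i` too, and `d i, v i, x i, x (i + 1), v (i + 2), d (i + 2)` would be an induced `P₆`: the
non-adjacencies among `v`'s and `x`'s come from the cycle being induced in the square, those
involving the `d`'s from efficient domination. The second claim follows since `d (i + 2)` sees at
most one of `x (i + 1)`, `x (i + 2)`.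
-/

/-- Twin-freeness of `H` makes `f` injective, so no distinctness of the image vertices is needed. -/
theorem Free.false_of_adj_iff {W : Type*} {G : SimpleGraph V} {H : SimpleGraph W}
    (hG : _root_.Free G H) (hH : ∀ i j, (∀ l, H.Adj i l ↔ H.Adj j l) → i = j) (f : W → V)
    (hf : ∀ i j, G.Adj (f i) (f j) ↔ H.Adj i j) : False := by
  have hinj : Function.Injective f := fun i j hij =>
    hH i j fun l => by rw [← hf, ← hf, hij]
  exact hG.false ⟨⟨f, hinj⟩, hf _ _⟩

theorem Free.not_induced_path6 {G : SimpleGraph V} (h6 : _root_.Free G (pathGraph 6))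
    {a b c d e f : V}
    (hab : G.Adj a b) (hbc : G.Adj b c) (hcd : G.Adj c d) (hde : G.Adj d e) (hef : G.Adj e f)
    (hac : ¬G.Adj a c) (had : ¬G.Adj a d) (hae : ¬G.Adj a e) (haf : ¬G.Adj a f)
    (hbd : ¬G.Adj b d) (hbe : ¬G.Adj b e) (hbf : ¬G.Adj b f)
    (hce : ¬G.Adj c e) (hcf : ¬G.Adj c f) (hdf : ¬G.Adj d f) : False := by
  refine h6.false_of_adj_iff (by simp only [pathGraph_adj]; decide)
    ![a, b, c, d, e, f] fun i j => ?_
  fin_cases i <;> fin_cases j <;> simp [pathGraph_adj] <;> grind [SimpleGraph.adj_symm]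

theorem Free.not_induced_house {G : SimpleGraph V} (hH : _root_.Free G house) {p q r s t : V}
    (hpq : G.Adj p q) (hqr : G.Adj q r) (hrs : G.Adj r s) (hsp : G.Adj s p)
    (htq : G.Adj t q) (htr : G.Adj t r)
    (hpr : ¬G.Adj p r) (hqs : ¬G.Adj q s) (htp : ¬G.Adj t p) (hts : ¬G.Adj t s) : False := by
  refine hH.false_of_adj_iff (by simp only [house, compl_adj, pathGraph_adj]; decide)
    ![q, s, t, p, r] fun i j => ?_
  fin_cases i <;> fin_cases j <;> simp [house, pathGraph_adj] <;> grind [SimpleGraph.adj_symm]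

theorem IsEDS.eq_of_adj {G : SimpleGraph V} {D : Set V} (hD : IsEDS G D) {a b u : V}
    (ha : a ∈ D) (hb : b ∈ D) (hau : G.Adj a u) (hbu : G.Adj b u) : a = b :=
  (hD u).unique ⟨ha, .inr hau⟩ ⟨hb, .inr hbu⟩

theorem IsEDS.not_adj {G : SimpleGraph V} {D : Set V} (hD : IsEDS G D) {a b : V}
    (ha : a ∈ D) (hb : b ∈ D) (hab : a ≠ b) : ¬G.Adj a b :=
  fun h => hab ((hD b).unique ⟨ha, .inr h⟩ ⟨hb, .inl rfl⟩)

theorem square_adj_of_adj {G : SimpleGraph V} {u w : V} (h : G.Adj u w) : (square G).Adj u w :=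
  ⟨h.ne, .inl h⟩

theorem square_adj_of_adj_of_adj {G : SimpleGraph V} {u y w : V} (hne : u ≠ w)
    (huy : G.Adj u y) (hyw : G.Adj y w) : (square G).Adj u w :=
  ⟨hne, .inr ⟨y, huy, hyw⟩⟩

theorem ZMod.natCast_ne_zero_of_pos_of_lt {k n : ℕ} (h0 : 0 < n) (hn : n < k) :
    (n : ZMod k) ≠ 0 := by
  rw [Ne, ZMod.natCast_eq_zero_iff]
  exact Nat.not_dvd_of_pos_of_lt h0 hn

structure EDSquareCycle (G : SimpleGraph V) (D : Set V) {k : ℕ} (v x d : ZMod k → V) :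
    Prop where
  isEDS : IsEDS G D
  four_le : 4 ≤ k
  v_injective : Function.Injective v
  not_square_adj : ∀ i j, j ≠ i - 1 → j ≠ i → j ≠ i + 1 → ¬(square G).Adj (v i) (v j)
  dist_eq_two : ∀ i, G.dist (v i) (v (i + 1)) = 2
  adj_x : ∀ i, G.Adj (v i) (x i) ∧ G.Adj (x i) (v (i + 1))
  x_adj_x : ∀ i, G.Adj (x i) (x (i + 1))
  d_mem : ∀ i, d i ∈ D
  d_adj : ∀ i, G.Adj (d i) (v i)
  d_injective : Function.Injective d

namespace EDSquareCycle

variable {G : SimpleGraph V} {D : Set V} {k : ℕ} {v x d : ZMod k → V}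

theorem natCast_ne_zero (C : EDSquareCycle G D v x d) {n : ℕ} (h0 : 0 < n) (hn : n < 4) :
    (n : ZMod k) ≠ 0 :=
  ZMod.natCast_ne_zero_of_pos_of_lt h0 (hn.trans_le C.four_le)

theorem add_one_ne (C : EDSquareCycle G D v x d) (i : ZMod k) : i + 1 ≠ i := fun h =>
  C.natCast_ne_zero (n := 1) (by norm_num) (by norm_num) (by push_cast; linear_combination h)

theorem add_two_ne (C : EDSquareCycle G D v x d) (i : ZMod k) : i + 2 ≠ i := fun h =>
  C.natCast_ne_zero (n := 2) (by norm_num) (by norm_num) (by push_cast; linear_combination h)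

theorem add_two_ne_add_one (C : EDSquareCycle G D v x d) (i : ZMod k) :
    i + 2 ≠ i + 1 := fun h =>
  C.natCast_ne_zero (n := 1) (by norm_num) (by norm_num) (by push_cast; linear_combination h)

theorem add_two_ne_sub_one (C : EDSquareCycle G D v x d) (i : ZMod k) : i + 2 ≠ i - 1 := fun h =>
  C.natCast_ne_zero (n := 3) (by norm_num) (by norm_num) (by push_cast; linear_combination h)

theorem x_adj_v_add_two (C : EDSquareCycle G D v x d) (i : ZMod k) :
    G.Adj (x (i + 1)) (v (i + 2)) := by
  simpa only [add_assoc, one_add_one_eq_two] using (C.adj_x (i + 1)).2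

theorem not_adj_v_add_one (C : EDSquareCycle G D v x d) (i : ZMod k) : ¬G.Adj (v i) (v (i + 1)) :=
  fun h => by simpa [dist_eq_one_iff_adj.mpr h] using C.dist_eq_two i

theorem not_square_adj_v_add_two (C : EDSquareCycle G D v x d) (i : ZMod k) :
    ¬(square G).Adj (v i) (v (i + 2)) :=
  C.not_square_adj i _ (C.add_two_ne_sub_one i) (C.add_two_ne i) (C.add_two_ne_add_one i)

theorem not_adj_v_add_two (C : EDSquareCycle G D v x d) (i : ZMod k) : ¬G.Adj (v i) (v (i + 2)) :=
  fun h => C.not_square_adj_v_add_two i (square_adj_of_adj h)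

theorem not_adj_v_x_add_one (C : EDSquareCycle G D v x d) (i : ZMod k) :
    ¬G.Adj (v i) (x (i + 1)) := fun h =>
  C.not_square_adj_v_add_two i <|
    square_adj_of_adj_of_adj (C.v_injective.ne (C.add_two_ne i).symm) h (C.x_adj_v_add_two i)

theorem not_adj_x_v_add_two (C : EDSquareCycle G D v x d) (i : ZMod k) :
    ¬G.Adj (x i) (v (i + 2)) := fun h =>
  C.not_square_adj_v_add_two i <|
    square_adj_of_adj_of_adj (C.v_injective.ne (C.add_two_ne i).symm) (C.adj_x i).1 h

theorem not_adj_d_v (C : EDSquareCycle G D v x d) {i j : ZMod k} (hij : i ≠ j) :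
    ¬G.Adj (d i) (v j) := fun h =>
  hij (C.d_injective (C.isEDS.eq_of_adj (C.d_mem i) (C.d_mem j) h (C.d_adj j)))

theorem not_adj_d_d (C : EDSquareCycle G D v x d) {i j : ZMod k} (hij : i ≠ j) :
    ¬G.Adj (d i) (d j) :=
  C.isEDS.not_adj (C.d_mem i) (C.d_mem j) (C.d_injective.ne hij)

theorem not_adj_d_x_add_one (C : EDSquareCycle G D v x d) (hH : _root_.Free G house)
    {i : ZMod k} (hi : ¬G.Adj (d i) (x i)) : ¬G.Adj (d i) (x (i + 1)) := fun h =>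
  hH.not_induced_house (C.adj_x i).1 (C.x_adj_x i) h.symm (C.d_adj i) (C.adj_x i).2.symm
    (C.adj_x (i + 1)).1 (C.not_adj_v_x_add_one i) (fun h' => hi h'.symm)
    (fun h' => C.not_adj_v_add_one i h'.symm)
    (fun h' => C.not_adj_d_v (C.add_one_ne i).symm h'.symm)

theorem not_adj_d_add_two_x (C : EDSquareCycle G D v x d) (hH : _root_.Free G house)
    {i : ZMod k} (hi : ¬G.Adj (d (i + 2)) (x (i + 1))) : ¬G.Adj (d (i + 2)) (x i) := fun h =>
  hH.not_induced_house h (C.x_adj_x i) (C.x_adj_v_add_two i) (C.d_adj (i + 2)).symm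
    (C.adj_x i).2.symm (C.adj_x (i + 1)).1 hi (C.not_adj_x_v_add_two i)
    (fun h' => C.not_adj_d_v (C.add_two_ne_add_one i) h'.symm)
    (by simpa only [add_assoc, one_add_one_eq_two] using C.not_adj_v_add_one (i + 1))

theorem adj_d_add_two_x_add_one (C : EDSquareCycle G D v x d) (h6 : _root_.Free G (pathGraph 6))
    (hH : _root_.Free G house) {i : ZMod k} (hi : ¬G.Adj (d i) (x i)) :
    G.Adj (d (i + 2)) (x (i + 1)) := by
  by_contra h
  exact h6.not_induced_path6 (C.d_adj i) (C.adj_x i).1 (C.x_adj_x i) (C.x_adj_v_add_two i)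
    (C.d_adj (i + 2)).symm hi (C.not_adj_d_x_add_one hH hi) (C.not_adj_d_v (C.add_two_ne i).symm)
    (C.not_adj_d_d (C.add_two_ne i).symm) (C.not_adj_v_x_add_one i) (C.not_adj_v_add_two i)
    (fun h' => C.not_adj_d_v (C.add_two_ne i) h'.symm) (C.not_adj_x_v_add_two i)
    (fun h' => C.not_adj_d_add_two_x hH h h'.symm) (fun h' => h h'.symm)

end EDSquareCycle

theorem stmt8_general (G : SimpleGraph V) (h6 : _root_.Free G (pathGraph 6)) (hH : _root_.Free G house)
    (D : Set V) (hED : IsEDS G D)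
    (k : ℕ) (hk : 4 ≤ k) (v : ZMod k → V) (hinj : Function.Injective v)
    (hnon : ∀ i j : ZMod k, j ≠ i - 1 → j ≠ i → j ≠ i + 1 → ¬ (square G).Adj (v i) (v j))
    (x : ZMod k → V) (hd2 : ∀ i : ZMod k, G.dist (v i) (v (i + 1)) = 2)
    (hx : ∀ i : ZMod k, G.Adj (v i) (x i) ∧ G.Adj (x i) (v (i + 1)))
    (hxadj : ∀ i : ZMod k, G.Adj (x i) (x (i + 1)))
    (d : ZMod k → V) (hdD : ∀ i : ZMod k, d i ∈ D)
    (hdv : ∀ i : ZMod k, G.Adj (d i) (v i))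
    (hdinj : Function.Injective d)
    (hone : ∀ i : ZMod k, ¬ G.Adj (d i) (x (i - 1)) ∨ ¬ G.Adj (d i) (x i)) :
    ∀ i : ZMod k, ¬ G.Adj (d i) (x i) →
      G.Adj (d (i + 2)) (x (i + 1)) ∧ ¬ G.Adj (d (i + 2)) (x (i + 2)) := by
  intro i hi
  have C : EDSquareCycle G D v x d := ⟨hED, hk, hinj, hnon, hd2, hx, hxadj, hdD, hdv, hdinj⟩
  have hnext : G.Adj (d (i + 2)) (x (i + 1)) := C.adj_d_add_two_x_add_one h6 hH hi
  refine ⟨hnext, (hone (i + 2)).resolve_left ?_⟩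
  rwa [show i + 2 - 1 = i + 1 by ring, not_not]

theorem stmt8 (G : SimpleGraph V) (h6 : _root_.Free G (pathGraph 6)) (hH : _root_.Free G house)
    (hhole : HoleFree G) (hdom : _root_.Free G domino)
    (D : Set V) (hED : IsEDS G D)
    (k : ℕ) (hk : 4 ≤ k) (v : ZMod k → V) (hinj : Function.Injective v)
    (hadj : ∀ i : ZMod k, (square G).Adj (v i) (v (i + 1)))
    (hnon : ∀ i j : ZMod k, j ≠ i - 1 → j ≠ i → j ≠ i + 1 → ¬ (square G).Adj (v i) (v j))
    (x : ZMod k → V) (hd2 : ∀ i : ZMod k, G.dist (v i) (v (i + 1)) = 2)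
    (hx : ∀ i : ZMod k, G.Adj (v i) (x i) ∧ G.Adj (x i) (v (i + 1)))
    (hxadj : ∀ i : ZMod k, G.Adj (x i) (x (i + 1)))
    (hDout : ∀ i : ZMod k, v i ∉ D ∧ x i ∉ D)
    (d : ZMod k → V) (hdD : ∀ i : ZMod k, d i ∈ D)
    (hdv : ∀ i : ZMod k, G.Adj (d i) (v i))
    (hout : ∀ i j : ZMod k, d i ≠ v j ∧ d i ≠ x j)
    (hdinj : Function.Injective d)
    (hone : ∀ i : ZMod k, ¬ G.Adj (d i) (x (i - 1)) ∨ ¬ G.Adj (d i) (x i)) :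
    ∀ i : ZMod k, ¬ G.Adj (d i) (x i) →
      G.Adj (d (i + 2)) (x (i + 1)) ∧ ¬ G.Adj (d (i + 2)) (x (i + 2)) :=
  stmt8_general G h6 hH D hED k hk v hinj hnon x hd2 hx hxadj d hdD hdv hdinj hone
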